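/- Let f : [0,1] → ℝ be a continuous function with f(x) ≠ 0 for all x ∈ [0,1], and let n ∈ ℕ with n ≥ 1. Then the Hausdorff dimension and the upper and lower box dimensions of the graph of fⁿ all equal the corresponding dimensions of the graph of f. -/

import Mathlib

open Set Filter Metric

noncomputable def coverNum {α : Type*} [PseudoMetricSpace α] (F : Set α) (δ : ℝ) : ℕ :=
  sInf {n : ℕ | ∃ t : Finset α, t.card = n ∧ F ⊆ ⋃ p ∈ t, Metric.closedBall p δ}

noncomputable def upperBoxDim {α : Type*} [PseudoMetricSpace α] (F : Set α) : ℝ :=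
  Filter.limsup (fun δ : ℝ => Real.log (coverNum F δ) / -Real.log δ)
    (nhdsWithin (0 : ℝ) (Set.Ioi 0))

noncomputable def lowerBoxDim {α : Type*} [PseudoMetricSpace α] (F : Set α) : ℝ :=
  Filter.liminf (fun δ : ℝ => Real.log (coverNum F δ) / -Real.log δ)
    (nhdsWithin (0 : ℝ) (Set.Ioi 0))

/-- Graph of `f` over the set `X`. -/
def fnGraphOn (f : ℝ → ℝ) (X : Set ℝ) : Set (ℝ × ℝ) := (fun x => (x, f x)) '' X

/-- Graph of `f` over `[0,1]`. -/
def G (f : ℝ → ℝ) : Set (ℝ × ℝ) := fnGraphOn f (Set.Icc 0 1)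

lemma grid1d {R δ x : ℝ} (hδ : 0 < δ) (hx : |x| ≤ R) :
    ∃ i : ℕ, i < Nat.floor (2*R/δ) + 1 ∧ |x - (-R + δ * i)| ≤ δ := by
  obtain ⟨hx1, hx2⟩ := abs_le.1 hx
  have hxR : 0 ≤ x + R := by linarith
  refine ⟨Nat.floor ((x + R)/δ), ?_, ?_⟩
  · have h1 : (x + R)/δ ≤ 2*R/δ := by
      rw [div_le_div_iff_of_pos_right hδ] <;> linarith
    exact Nat.lt_succ_of_le (Nat.floor_le_floor h1)
  · have h2 : (Nat.floor ((x + R)/δ) : ℝ) * δ ≤ (x + R)/δ * δ :=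
      mul_le_mul_of_nonneg_right (Nat.floor_le (by positivity)) hδ.le
    have h3 : (x + R)/δ * δ < ((Nat.floor ((x + R)/δ) : ℝ) + 1) * δ :=
      mul_lt_mul_of_pos_right (Nat.lt_floor_add_one _) hδ
    have h4 : (x + R)/δ * δ = x + R := div_mul_cancel₀ _ hδ.ne'
    rw [h4] at h2 h3
    rw [abs_le]
    constructor <;> nlinarith

lemma grid_cover {R δ : ℝ} (hδ : 0 < δ) :
    ∃ t : Finset (ℝ × ℝ), t.card ≤ (Nat.floor (2*R/δ) + 1)^2 ∧
      Metric.closedBall (0 : ℝ × ℝ) R ⊆ ⋃ p ∈ t, Metric.closedBall p δ := by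
  set K := Nat.floor (2*R/δ) + 1 with hK
  refine ⟨(Finset.range K ×ˢ Finset.range K).image
    (fun ij => ((-R + δ * ij.1 : ℝ), (-R + δ * ij.2 : ℝ))), ?_, ?_⟩
  · calc _ ≤ (Finset.range K ×ˢ Finset.range K).card := Finset.card_image_le
      _ = K^2 := by simp [sq]
  · rintro ⟨x, y⟩ hp
    rw [Metric.mem_closedBall, Prod.dist_eq] at hp
    simp only [Prod.fst_zero, Prod.snd_zero, Real.dist_eq, sub_zero] at hp
    obtain ⟨i, hi, hix⟩ := grid1d hδ (le_trans (le_max_left _ _) hp)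
    obtain ⟨j, hj, hjy⟩ := grid1d hδ (le_trans (le_max_right _ _) hp)
    simp only [Set.mem_iUnion, Finset.mem_image, Finset.mem_product, Finset.mem_range]
    refine ⟨_, ⟨⟨(i, j), ⟨hi, hj⟩, rfl⟩, ?_⟩⟩
    rw [Metric.mem_closedBall, Prod.dist_eq]
    simp only [Real.dist_eq]
    exact max_le hix hjy

lemma coverNum_le_card {α : Type*} [PseudoMetricSpace α] {F : Set α} {δ : ℝ}
    {t : Finset α} (h : F ⊆ ⋃ p ∈ t, Metric.closedBall p δ) : coverNum F δ ≤ t.card :=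
  Nat.sInf_le ⟨t, rfl, h⟩

lemma coverSet_nonempty {F : Set (ℝ × ℝ)} {R δ : ℝ} (hδ : 0 < δ)
    (hFR : F ⊆ Metric.closedBall 0 R) :
    {n : ℕ | ∃ t : Finset (ℝ × ℝ), t.card = n ∧ F ⊆ ⋃ p ∈ t, Metric.closedBall p δ}.Nonempty := by
  obtain ⟨t, _, ht⟩ := grid_cover (R := R) hδ
  exact ⟨t.card, t, rfl, hFR.trans ht⟩

lemma coverNum_le_bound {F : Set (ℝ × ℝ)} {R δ : ℝ} (hδ : 0 < δ)
    (hFR : F ⊆ Metric.closedBall 0 R) :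
    coverNum F δ ≤ (Nat.floor (2*R/δ) + 1)^2 := by
  obtain ⟨t, htc, ht⟩ := grid_cover (R := R) hδ
  exact (coverNum_le_card (hFR.trans ht)).trans htc

lemma one_le_coverNum {α : Type*} [PseudoMetricSpace α] {F : Set α} {δ : ℝ}
    (hF : F.Nonempty)
    (hcov : {n : ℕ | ∃ t : Finset α, t.card = n ∧ F ⊆ ⋃ p ∈ t, Metric.closedBall p δ}.Nonempty) :
    1 ≤ coverNum F δ := by
  obtain ⟨t, htc, ht⟩ := Nat.sInf_mem hcov
  rw [Nat.one_le_iff_ne_zero]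
  intro h0
  rw [coverNum] at h0
  rw [h0] at htc
  obtain ⟨x, hx⟩ := hF
  have := ht hx
  rw [Finset.card_eq_zero.1 htc] at this
  simp at this

lemma coverNum_image_le {α : Type*} [PseudoMetricSpace α] {F B : Set α} {Φ : α → α} {K : ℝ}
    (hK : 0 ≤ K) (himg : Φ '' F = B)
    (hlip : ∀ p ∈ F, ∀ q ∈ F, dist (Φ p) (Φ q) ≤ K * dist p q) {δ : ℝ} (hδ : 0 < δ)
    (hcov : {n : ℕ | ∃ t : Finset α, t.card = n ∧ F ⊆ ⋃ p ∈ t, Metric.closedBall p δ}.Nonempty) :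
    coverNum B (2*K*δ) ≤ coverNum F δ := by
  classical
  obtain ⟨t, htc, ht⟩ := Nat.sInf_mem hcov
  set c : α → α := fun p =>
    if h : (F ∩ Metric.closedBall p δ).Nonempty then Φ h.choose else Φ p with hc
  have hsub : B ⊆ ⋃ q ∈ t.image c, Metric.closedBall q (2*K*δ) := by
    rintro b hb
    rw [← himg] at hb
    obtain ⟨a, haF, rfl⟩ := hb
    obtain ⟨p, hpt, hap⟩ := Set.mem_iUnion₂.1 (ht haF)
    have hne : (F ∩ Metric.closedBall p δ).Nonempty := ⟨a, haF, hap⟩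
    have hx := hne.choose_spec
    set x := hne.choose
    have hax : dist a x ≤ 2*δ := by
      have h1 : dist a p ≤ δ := hap
      have h2 : dist x p ≤ δ := hx.2
      calc dist a x ≤ dist a p + dist p x := dist_triangle _ _ _
        _ ≤ δ + δ := add_le_add h1 (by rwa [dist_comm])
        _ = 2*δ := by ring
    have : dist (Φ a) (Φ x) ≤ 2*K*δ := by
      calc dist (Φ a) (Φ x) ≤ K * dist a x := hlip a haF x hx.1
        _ ≤ K * (2*δ) := by nlinarith [hK]
        _ = 2*K*δ := by ring
    refine Set.mem_iUnion₂.2 ⟨c p, Finset.mem_image_of_mem c hpt, ?_⟩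
    rw [Metric.mem_closedBall, hc]
    simpa only [dif_pos hne] using this
  calc coverNum B (2*K*δ) ≤ (t.image c).card := coverNum_le_card hsub
    _ ≤ t.card := Finset.card_image_le
    _ = coverNum F δ := htc

lemma tendsto_mul_nhdsGT {c : ℝ} (hc : 0 < c) :
    Filter.Tendsto (fun δ : ℝ => δ * c) (nhdsWithin 0 (Set.Ioi 0)) (nhdsWithin 0 (Set.Ioi 0)) := by
  apply tendsto_nhdsWithin_of_tendsto_nhds_of_eventually_within
  · have h := ((continuous_mul_right c).tendsto (0 : ℝ)).mono_left (nhdsWithin_le_nhds (s := Set.Ioi 0))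
    simpa using h
  · filter_upwards [self_mem_nhdsWithin] with x hx
    exact mul_pos hx hc

lemma map_mul_nhdsGT {c : ℝ} (hc : 0 < c) :
    Filter.map (fun δ : ℝ => δ * c) (nhdsWithin 0 (Set.Ioi 0)) = nhdsWithin (0:ℝ) (Set.Ioi 0) := by
  refine le_antisymm (tendsto_mul_nhdsGT hc) ?_
  have h1 : Filter.map (fun δ : ℝ => δ * c)
      (Filter.map (fun δ : ℝ => δ * c⁻¹) (nhdsWithin 0 (Set.Ioi 0)))
      = nhdsWithin (0:ℝ) (Set.Ioi 0) := by
    rw [Filter.map_map]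
    convert Filter.map_id
    funext δ
    simp [Function.comp, inv_mul_cancel₀ hc.ne']
    field_simp
  calc nhdsWithin (0:ℝ) (Set.Ioi 0) = _ := h1.symm
    _ ≤ Filter.map (fun δ : ℝ => δ * c) (nhdsWithin 0 (Set.Ioi 0)) :=
      Filter.map_mono (tendsto_mul_nhdsGT (inv_pos.2 hc))

lemma tendsto_div_nhdsGT {c : ℝ} (hc : 0 < c) :
    Filter.Tendsto (fun δ : ℝ => δ / c) (nhdsWithin 0 (Set.Ioi 0)) (nhdsWithin 0 (Set.Ioi 0)) := by
  simpa [div_eq_mul_inv] using tendsto_mul_nhdsGT (inv_pos.2 hc)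

lemma map_div_nhdsGT {c : ℝ} (hc : 0 < c) :
    Filter.map (fun δ : ℝ => δ / c) (nhdsWithin 0 (Set.Ioi 0)) = nhdsWithin (0:ℝ) (Set.Ioi 0) := by
  have := map_mul_nhdsGT (inv_pos.2 hc)
  simpa [div_eq_mul_inv] using this

lemma limsup_comp_div {u : ℝ → ℝ} {c : ℝ} (hc : 0 < c) :
    Filter.limsup (fun δ : ℝ => u (δ / c)) (nhdsWithin 0 (Set.Ioi 0))
      = Filter.limsup u (nhdsWithin 0 (Set.Ioi 0)) := by
  conv_rhs => rw [← map_div_nhdsGT hc]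
  simp only [Filter.limsup]
  rw [Filter.map_map]
  rfl

lemma liminf_comp_div {u : ℝ → ℝ} {c : ℝ} (hc : 0 < c) :
    Filter.liminf (fun δ : ℝ => u (δ / c)) (nhdsWithin 0 (Set.Ioi 0))
      = Filter.liminf u (nhdsWithin 0 (Set.Ioi 0)) := by
  conv_rhs => rw [← map_div_nhdsGT hc]
  simp only [Filter.liminf]
  rw [Filter.map_map]
  rfl

lemma u_bound {F : Set (ℝ × ℝ)} {R : ℝ} (hR : 1 ≤ R) (hF : F.Nonempty)
    (hFR : F ⊆ Metric.closedBall 0 R) {δ : ℝ} (h0 : 0 < δ) (h1 : δ < Real.exp (-1)) :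
    0 ≤ Real.log (coverNum F δ) / -Real.log δ ∧
      Real.log (coverNum F δ) / -Real.log δ ≤ 2 * Real.log (3*R) + 2 := by
  have hδ1 : δ < 1 := h1.trans_le (by
    rw [show (1:ℝ) = Real.exp 0 by simp]
    exact (Real.exp_le_exp.2 (by norm_num)))
  have hlogδ : Real.log δ ≤ -1 := (Real.log_le_iff_le_exp h0).2 h1.le
  have hL : 1 ≤ -Real.log δ := by linarith
  have hN1 : 1 ≤ coverNum F δ := one_le_coverNum hF (coverSet_nonempty h0 hFR)
  have hRδ : 1 ≤ R / δ := (one_le_div h0).2 (by linarith)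
  have hfl : ((Nat.floor (2*R/δ) + 1 : ℕ) : ℝ) ≤ 3*R/δ := by
    push_cast
    have := Nat.floor_le (show (0:ℝ) ≤ 2*R/δ by positivity)
    have h2 : 2*R/δ + 1 ≤ 3*R/δ := by
      rw [div_add' _ _ _ h0.ne']
      rw [div_le_div_iff_of_pos_right h0]
      linarith [(le_div_iff₀ h0).1 hRδ]
    linarith
  have hNle : ((coverNum F δ : ℕ) : ℝ) ≤ (3*R/δ)^2 := by
    calc ((coverNum F δ : ℕ) : ℝ) ≤ (((Nat.floor (2*R/δ) + 1)^2 : ℕ) : ℝ) :=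
          Nat.cast_le.2 (coverNum_le_bound h0 hFR)
      _ = ((Nat.floor (2*R/δ) + 1 : ℕ) : ℝ)^2 := by push_cast; ring
      _ ≤ (3*R/δ)^2 := by
          apply pow_le_pow_left₀ (by positivity) hfl
  have h3R : (1:ℝ) ≤ 3*R := by linarith
  have hlog3R : 0 ≤ Real.log (3*R) := Real.log_nonneg h3R
  have hlogN : Real.log (coverNum F δ) ≤ 2 * Real.log (3*R) + 2 * (-Real.log δ) := by
    calc Real.log (coverNum F δ) ≤ Real.log ((3*R/δ)^2) :=
          Real.log_le_log (by exact_mod_cast hN1) hNle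
      _ = 2 * Real.log (3*R/δ) := by rw [Real.log_pow]; push_cast; ring
      _ = 2 * (Real.log (3*R) - Real.log δ) := by
          rw [Real.log_div (by linarith) h0.ne']
      _ = 2 * Real.log (3*R) + 2 * (-Real.log δ) := by ring
  have hlogN0 : 0 ≤ Real.log (coverNum F δ) := Real.log_nonneg (by exact_mod_cast hN1)
  constructor
  · exact div_nonneg hlogN0 (by linarith)
  · rw [div_le_iff₀ (by linarith : (0:ℝ) < -Real.log δ)]
    nlinarith

lemma boxDims_le {A B : Set (ℝ × ℝ)} {R c : ℝ} (hA : A.Nonempty) (hB : B.Nonempty)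
    (hR : 1 ≤ R) (hAR : A ⊆ Metric.closedBall 0 R) (hBR : B ⊆ Metric.closedBall 0 R)
    (hc : 1 ≤ c) (h : ∀ δ : ℝ, 0 < δ → coverNum A (c*δ) ≤ coverNum B δ) :
    upperBoxDim A ≤ upperBoxDim B ∧ lowerBoxDim A ≤ lowerBoxDim B := by
  set l := nhdsWithin (0:ℝ) (Set.Ioi 0) with hl
  haveI : l.NeBot := by rw [hl]; exact nhdsGT_neBot 0
  set uA : ℝ → ℝ := fun δ => Real.log (coverNum A δ) / -Real.log δ with huA
  set uB : ℝ → ℝ := fun δ => Real.log (coverNum B δ) / -Real.log δ with huB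
  set C : ℝ := 2 * Real.log (3*R) + 2 with hC
  have hc0 : 0 < c := lt_of_lt_of_le one_pos hc
  have hC0 : 0 ≤ C := by
    have : 0 ≤ Real.log (3*R) := Real.log_nonneg (by linarith)
    rw [hC]; linarith
  have hm : Filter.Tendsto (fun δ : ℝ => δ / c) l l := tendsto_div_nhdsGT hc0
  have hbA : ∀ᶠ δ in l, 0 ≤ uA δ ∧ uA δ ≤ C := by
    filter_upwards [Ioo_mem_nhdsGT_of_mem ⟨le_refl (0:ℝ), Real.exp_pos (-1)⟩] with δ hδ
    exact u_bound hR hA hAR hδ.1 hδ.2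
  have hbB : ∀ᶠ δ in l, 0 ≤ uB δ ∧ uB δ ≤ C := by
    filter_upwards [Ioo_mem_nhdsGT_of_mem ⟨le_refl (0:ℝ), Real.exp_pos (-1)⟩] with δ hδ
    exact u_bound hR hB hBR hδ.1 hδ.2
  have hbB' : ∀ᶠ δ in l, 0 ≤ uB (δ/c) ∧ uB (δ/c) ≤ C := hm.eventually hbB
  have hlogc : 0 ≤ Real.log c := Real.log_nonneg hc
  -- key inequality
  have key : ∀ ε : ℝ, 0 < ε → ∀ᶠ δ in l, uA δ ≤ uB (δ/c) + ε := by
    intro ε hε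
    set d : ℝ := min (Real.exp (-1)) (Real.exp (-(C * Real.log c / ε))) with hd
    have hd0 : 0 < d := lt_min (Real.exp_pos _) (Real.exp_pos _)
    filter_upwards [Ioo_mem_nhdsGT_of_mem ⟨le_refl (0:ℝ), hd0⟩, hbB'] with δ hδ hub
    obtain ⟨h0, h1⟩ := hδ
    have hδe : δ < Real.exp (-1) := h1.trans_le (min_le_left _ _)
    have hδ1 : δ < 1 := hδe.trans_le (by
      rw [show (1:ℝ) = Real.exp 0 by simp]
      exact Real.exp_le_exp.2 (by norm_num))
    have hδc : 0 < δ / c := div_pos h0 hc0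
    have hlogδ : Real.log δ ≤ -1 := (Real.log_le_iff_le_exp h0).2 hδe.le
    have hL : 1 ≤ -Real.log δ := by linarith
    have hL2 : C * Real.log c / ε ≤ -Real.log δ := by
      have : Real.log δ ≤ -(C * Real.log c / ε) :=
        (Real.log_le_iff_le_exp h0).2 (h1.le.trans (min_le_right _ _))
      linarith
    have hNA : 1 ≤ coverNum A δ := one_le_coverNum hA (coverSet_nonempty h0 hAR)
    have hNB : 1 ≤ coverNum B (δ/c) := one_le_coverNum hB (coverSet_nonempty hδc hBR)
    have hcmp : coverNum A δ ≤ coverNum B (δ/c) := by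
      have := h (δ/c) hδc
      rwa [show c * (δ/c) = δ by field_simp] at this
    set x : ℝ := Real.log (coverNum B (δ/c)) with hx
    have hx0 : 0 ≤ x := Real.log_nonneg (by exact_mod_cast hNB)
    set L : ℝ := -Real.log δ with hLdef
    have hLpos : 0 < L := by rw [hLdef]; linarith
    set L' : ℝ := -Real.log (δ/c) with hL'def
    have hL'eq : L' = L + Real.log c := by
      rw [hL'def, hLdef, Real.log_div h0.ne' hc0.ne']; ring
    have hL'pos : 0 < L' := by rw [hL'eq]; linarith
    have huBδ : uB (δ/c) = x / L' := rfl
    have hnum : Real.log ((coverNum A δ : ℕ) : ℝ) ≤ x := by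
      rw [hx]
      exact Real.log_le_log (by exact_mod_cast hNA) (by exact_mod_cast hcmp)
    have step1 : uA δ ≤ x / L := by
      show Real.log (coverNum A δ) / -Real.log δ ≤ x / L
      rw [hLdef]
      exact (div_le_div_iff_of_pos_right hLpos).2 hnum
    have heq : x / L = x / L' + (x / L') * (Real.log c / L) := by
      rw [hL'eq]; field_simp
    have hb2 : (x / L') * (Real.log c / L) ≤ C * (Real.log c / L) := by
      apply mul_le_mul_of_nonneg_right ?_ (div_nonneg hlogc hLpos.le)
      rw [← huBδ]; exact hub.2
    have hb3 : C * (Real.log c / L) ≤ ε := by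
      rw [mul_div_assoc']
      rw [div_le_iff₀ hLpos]
      have := (div_le_iff₀ hε).1 hL2
      linarith
    calc uA δ ≤ x / L := step1
      _ = x / L' + (x/L')*(Real.log c/L) := heq
      _ ≤ x/L' + ε := by linarith [hb2.trans hb3]
      _ = uB (δ/c) + ε := by rw [huBδ]
  -- boundedness facts
  have coA : Filter.IsCoboundedUnder (· ≤ ·) l uA :=
    (Filter.isBoundedUnder_of_eventually_ge (hbA.mono fun δ h => h.1)).isCoboundedUnder_le
  have bdA_lo : Filter.IsBoundedUnder (· ≥ ·) l uA :=
    Filter.isBoundedUnder_of_eventually_ge (hbA.mono fun δ h => h.1)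
  have bd2 : Filter.IsBoundedUnder (· ≤ ·) l (fun δ => uB (δ/c)) :=
    Filter.isBoundedUnder_of_eventually_le (hbB'.mono fun δ h => h.2)
  have bd2' : Filter.IsBoundedUnder (· ≥ ·) l (fun δ => uB (δ/c)) :=
    Filter.isBoundedUnder_of_eventually_ge (hbB'.mono fun δ h => h.1)
  have hcompU : Filter.limsup (fun δ => uB (δ/c)) l = Filter.limsup uB l := limsup_comp_div hc0
  have hcompL : Filter.liminf (fun δ => uB (δ/c)) l = Filter.liminf uB l := liminf_comp_div hc0
  constructor
  · -- upper box dim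
    apply le_of_forall_pos_le_add
    intro ε hε
    have h1 : Filter.limsup uA l ≤ Filter.limsup (fun δ => uB (δ/c) + ε) l := by
      exact Filter.limsup_le_limsup (key ε hε) coA
        (Filter.isBoundedUnder_of_eventually_le
          (hbB'.mono fun δ h => add_le_add_left h.2 ε))
    have h2 : Filter.limsup (fun δ => uB (δ/c) + ε) l
        ≤ Filter.limsup (fun δ => uB (δ/c)) l + ε := by
      have heqf : (fun δ => uB (δ/c) + ε) = (fun δ => uB (δ/c)) + (fun _ => ε) := rfl
      rw [heqf]
      have := limsup_add_le (f := l) (u := fun δ => uB (δ/c)) (v := fun _ => ε)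
        bd2' bd2
        ((Filter.isBoundedUnder_of_eventually_ge
          (Filter.Eventually.of_forall fun _ => le_refl ε)).isCoboundedUnder_le)
        (Filter.isBoundedUnder_of_eventually_le (Filter.Eventually.of_forall fun _ => le_refl ε))
      rwa [Filter.limsup_const] at this
    calc upperBoxDim A = Filter.limsup uA l := rfl
      _ ≤ Filter.limsup (fun δ => uB (δ/c)) l + ε := h1.trans h2
      _ = upperBoxDim B + ε := by rw [hcompU]; rfl
  · -- lower box dim
    apply le_of_forall_pos_le_add
    intro ε hε
    have h1 : Filter.liminf uA l ≤ Filter.liminf (fun δ => uB (δ/c) + ε) l := by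
      exact Filter.liminf_le_liminf (key ε hε) bdA_lo
        ((Filter.isBoundedUnder_of_eventually_le
          (hbB'.mono fun δ h => add_le_add_left h.2 ε)).isCoboundedUnder_ge)
    have h2 : Filter.liminf (fun δ => uB (δ/c) + ε) l
        ≤ Filter.liminf (fun δ => uB (δ/c)) l + ε := by
      have heqf : (fun δ => uB (δ/c) + ε) = (fun _ => ε) + (fun δ => uB (δ/c)) := by
        funext δ; simp [add_comm]
      rw [heqf]
      have := liminf_add_le (f := l) (u := fun _ => ε) (v := fun δ => uB (δ/c))
        (Filter.isBoundedUnder_of_eventually_ge (Filter.Eventually.of_forall fun _ => le_refl ε))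
        (Filter.isBoundedUnder_of_eventually_le (Filter.Eventually.of_forall fun _ => le_refl ε))
        bd2' bd2.isCoboundedUnder_ge
      rw [Filter.limsup_const] at this
      linarith [this]
    calc lowerBoxDim A = Filter.liminf uA l := rfl
      _ ≤ Filter.liminf (fun δ => uB (δ/c)) l + ε := h1.trans h2
      _ = lowerBoxDim B + ε := by rw [hcompL]; rfl

lemma abs_pow_sub_pow_le' {a b M : ℝ} {n : ℕ} (ha : |a| ≤ M) (hb : |b| ≤ M) :
    |a^n - b^n| ≤ (n * M^(n-1)) * |a - b| := by
  have hM : 0 ≤ M := le_trans (abs_nonneg a) ha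
  rw [← geom_sum₂_mul a b n, abs_mul]
  apply mul_le_mul_of_nonneg_right ?_ (abs_nonneg _)
  calc |∑ i ∈ Finset.range n, a^i * b^(n-1-i)|
      ≤ ∑ i ∈ Finset.range n, |a^i * b^(n-1-i)| := Finset.abs_sum_le_sum_abs _ _
    _ ≤ ∑ _i ∈ Finset.range n, M^(n-1) := by
        apply Finset.sum_le_sum
        intro i hi
        rw [abs_mul, abs_pow, abs_pow]
        calc |a|^i * |b|^(n-1-i) ≤ M^i * M^(n-1-i) := by
              apply mul_le_mul (pow_le_pow_left₀ (abs_nonneg _) ha i)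
                (pow_le_pow_left₀ (abs_nonneg _) hb _) (by positivity) (by positivity)
          _ = M^(n-1) := by
              rw [← pow_add]
              congr 1
              have := Finset.mem_range.1 hi
              omega
    _ = n * M^(n-1) := by simp
  
lemma abs_pow_sub_pow_ge {a b m σ : ℝ} {n : ℕ} (hn : 1 ≤ n) (hσ : |σ| = 1)
    (haσ : a = σ * |a|) (hbσ : b = σ * |b|) (ham : m ≤ |a|) (hbm : m ≤ |b|) (hm : 0 ≤ m) :
    m^(n-1) * |a - b| ≤ |a^n - b^n| := by
  rw [← geom_sum₂_mul a b n, abs_mul]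
  apply mul_le_mul_of_nonneg_right ?_ (abs_nonneg _)
  have hsum : ∑ i ∈ Finset.range n, a^i * b^(n-1-i)
      = σ^(n-1) * ∑ i ∈ Finset.range n, |a|^i * |b|^(n-1-i) := by
    rw [Finset.mul_sum]
    apply Finset.sum_congr rfl
    intro i hi
    calc a^i * b^(n-1-i) = (σ*|a|)^i * (σ*|b|)^(n-1-i) := by rw [← haσ, ← hbσ]
      _ = (σ^i * σ^(n-1-i)) * (|a|^i * |b|^(n-1-i)) := by rw [mul_pow, mul_pow]; ring
      _ = σ^(n-1) * (|a|^i * |b|^(n-1-i)) := by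
          rw [← pow_add]
          congr 2
          have := Finset.mem_range.1 hi
          omega
  rw [hsum, abs_mul, abs_pow, hσ, one_pow, one_mul,
    abs_of_nonneg (Finset.sum_nonneg fun i _ => by positivity)]
  calc m^(n-1) ≤ |a|^(n-1) := pow_le_pow_left₀ hm ham _
    _ = |a|^(n-1) * |b|^(n-1-(n-1)) := by simp
    _ ≤ ∑ i ∈ Finset.range n, |a|^i * |b|^(n-1-i) := by
        apply Finset.single_le_sum (f := fun i => |a|^i * |b|^(n-1-i))
          (fun i _ => by positivity)
        rw [Finset.mem_range]; omega

theorem dims_graph_pow (f : ℝ → ℝ)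
    (hf : ContinuousOn f (Set.Icc 0 1)) (hne : ∀ x ∈ Set.Icc (0:ℝ) 1, f x ≠ 0)
    (n : ℕ) (hn : 1 ≤ n) :
    dimH (G (fun x => (f x) ^ n)) = dimH (G f) ∧
    upperBoxDim (G (fun x => (f x) ^ n)) = upperBoxDim (G f) ∧
    lowerBoxDim (G (fun x => (f x) ^ n)) = lowerBoxDim (G f) := by
  have h01 : (0:ℝ) ∈ Set.Icc (0:ℝ) 1 := ⟨le_refl 0, zero_le_one⟩
  have habs : ContinuousOn (fun x => |f x|) (Set.Icc 0 1) := hf.abs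
  obtain ⟨xm, hxm, hmin⟩ := isCompact_Icc.exists_isMinOn ⟨0, h01⟩ habs
  obtain ⟨xM, hxM, hmax⟩ := isCompact_Icc.exists_isMaxOn ⟨0, h01⟩ habs
  set m : ℝ := |f xm| with hmdef
  set M : ℝ := |f xM| with hMdef
  have hm0 : 0 < m := abs_pos.2 (hne xm hxm)
  have hbounds : ∀ x ∈ Set.Icc (0:ℝ) 1, m ≤ |f x| ∧ |f x| ≤ M :=
    fun x hx => ⟨isMinOn_iff.1 hmin x hx, isMaxOn_iff.1 hmax x hx⟩
  have hmM : m ≤ M := (hbounds xM hxM).1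
  have hM0 : 0 < M := lt_of_lt_of_le hm0 hmM
  -- sign
  have hsign : ∃ σ : ℝ, |σ| = 1 ∧ ∀ x ∈ Set.Icc (0:ℝ) 1, f x = σ * |f x| := by
    have hIVT : ∀ x ∈ Set.Icc (0:ℝ) 1, 0 < f 0 → 0 < f x := by
      intro x hx h0
      by_contra hc
      push_neg at hc
      have hsub : Set.uIcc (0:ℝ) x ⊆ Set.Icc 0 1 := by
        rw [Set.uIcc_of_le hx.1]
        exact Set.Icc_subset_Icc (le_refl 0) hx.2
      have h0mem : (0:ℝ) ∈ Set.uIcc (f x) (f 0) :=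
        Set.Icc_subset_uIcc ⟨hc, h0.le⟩
      rw [Set.uIcc_comm] at h0mem
      obtain ⟨y, hy, hfy⟩ := intermediate_value_uIcc (hf.mono hsub) h0mem
      exact hne y (hsub hy) hfy
    have hIVT' : ∀ x ∈ Set.Icc (0:ℝ) 1, f 0 < 0 → f x < 0 := by
      intro x hx h0
      by_contra hc
      push_neg at hc
      have hsub : Set.uIcc (0:ℝ) x ⊆ Set.Icc 0 1 := by
        rw [Set.uIcc_of_le hx.1]
        exact Set.Icc_subset_Icc (le_refl 0) hx.2
      have h0mem : (0:ℝ) ∈ Set.uIcc (f 0) (f x) :=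
        Set.Icc_subset_uIcc ⟨h0.le, hc⟩
      obtain ⟨y, hy, hfy⟩ := intermediate_value_uIcc (hf.mono hsub) h0mem
      exact hne y (hsub hy) hfy
    rcases lt_or_gt_of_ne (hne 0 h01) with h0 | h0
    · exact ⟨-1, by norm_num, fun x hx => by
        rw [abs_of_neg (hIVT' x hx h0)]; ring⟩
    · exact ⟨1, by norm_num, fun x hx => by
        rw [abs_of_pos (hIVT x hx h0)]; ring⟩
  obtain ⟨σ, hσ1, hσ⟩ := hsign
  -- constants and sets
  set K1 : ℝ := max 1 (n * M^(n-1)) with hK1def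
  set K2 : ℝ := max 1 ((m^(n-1))⁻¹) with hK2def
  have hK1 : 1 ≤ K1 := le_max_left _ _
  have hK2 : 1 ≤ K2 := le_max_left _ _
  set A : Set (ℝ × ℝ) := G f with hAdef
  set B : Set (ℝ × ℝ) := G (fun x => (f x) ^ n) with hBdef
  have hAne : A.Nonempty := ⟨(0, f 0), 0, h01, rfl⟩
  have hBne : B.Nonempty := ⟨(0, (f 0)^n), 0, h01, rfl⟩
  set R : ℝ := max 1 (max M (M^n)) with hRdef
  have hR1 : 1 ≤ R := le_max_left _ _
  have hAR : A ⊆ Metric.closedBall 0 R := by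
    rintro p ⟨x, hx, rfl⟩
    rw [Metric.mem_closedBall, Prod.dist_eq]
    simp only [Prod.fst_zero, Prod.snd_zero, Real.dist_eq, sub_zero]
    apply max_le
    · rw [abs_of_nonneg hx.1]; exact hx.2.trans hR1
    · exact ((hbounds x hx).2).trans ((le_max_left M (M^n)).trans (le_max_right _ _))
  have hBR : B ⊆ Metric.closedBall 0 R := by
    rintro p ⟨x, hx, rfl⟩
    rw [Metric.mem_closedBall, Prod.dist_eq]
    simp only [Prod.fst_zero, Prod.snd_zero, Real.dist_eq, sub_zero]
    apply max_le
    · rw [abs_of_nonneg hx.1]; exact hx.2.trans hR1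
    · calc |(f x)^n| = |f x|^n := by rw [abs_pow]
        _ ≤ M^n := pow_le_pow_left₀ (abs_nonneg _) (hbounds x hx).2 n
        _ ≤ R := (le_max_right M (M^n)).trans (le_max_right _ _)
  -- maps
  set Φ : ℝ × ℝ → ℝ × ℝ := fun p => (p.1, p.2 ^ n) with hΦdef
  set Ψ : ℝ × ℝ → ℝ × ℝ := fun p => (p.1, f p.1) with hΨdef
  have himgΦ : Φ '' A = B := by
    rw [hAdef, hBdef]
    show Φ '' ((fun x => (x, f x)) '' Set.Icc 0 1) = (fun x => (x, (f x)^n)) '' Set.Icc 0 1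
    rw [Set.image_image]
  have himgΨ : Ψ '' B = A := by
    rw [hAdef, hBdef]
    show Ψ '' ((fun x => (x, (f x)^n)) '' Set.Icc 0 1) = (fun x => (x, f x)) '' Set.Icc 0 1
    rw [Set.image_image]
  -- Lipschitz bounds
  have hlipΦ : ∀ p ∈ A, ∀ q ∈ A, dist (Φ p) (Φ q) ≤ K1 * dist p q := by
    rintro p ⟨x, hx, rfl⟩ q ⟨y, hy, rfl⟩
    show dist ((x : ℝ), f x ^ n) (y, f y ^ n) ≤ K1 * dist ((x:ℝ), f x) (y, f y)
    rw [Prod.dist_eq, Prod.dist_eq]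
    have hd0 : (0:ℝ) ≤ max (dist x y) (dist (f x) (f y)) :=
      le_trans dist_nonneg (le_max_left _ _)
    apply max_le
    · calc dist x y ≤ max (dist x y) (dist (f x) (f y)) := le_max_left _ _
        _ ≤ K1 * max (dist x y) (dist (f x) (f y)) := le_mul_of_one_le_left hd0 hK1
    · calc dist (f x ^ n) (f y ^ n) = |f x ^ n - f y ^ n| := Real.dist_eq _ _
        _ ≤ (n * M^(n-1)) * |f x - f y| :=
            abs_pow_sub_pow_le' (hbounds x hx).2 (hbounds y hy).2
        _ ≤ K1 * |f x - f y| :=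
            mul_le_mul_of_nonneg_right (le_max_right _ _) (abs_nonneg _)
        _ = K1 * dist (f x) (f y) := by rw [Real.dist_eq]
        _ ≤ K1 * max (dist x y) (dist (f x) (f y)) :=
            mul_le_mul_of_nonneg_left (le_max_right _ _) (by linarith)
  have hlipΨ : ∀ p ∈ B, ∀ q ∈ B, dist (Ψ p) (Ψ q) ≤ K2 * dist p q := by
    rintro p ⟨x, hx, rfl⟩ q ⟨y, hy, rfl⟩
    show dist ((x : ℝ), f x) (y, f y) ≤ K2 * dist ((x:ℝ), f x ^ n) (y, f y ^ n)
    rw [Prod.dist_eq, Prod.dist_eq]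
    have hd0 : (0:ℝ) ≤ max (dist x y) (dist (f x ^ n) (f y ^ n)) :=
      le_trans dist_nonneg (le_max_left _ _)
    apply max_le
    · calc dist x y ≤ max (dist x y) (dist (f x ^ n) (f y ^ n)) := le_max_left _ _
        _ ≤ K2 * _ := le_mul_of_one_le_left hd0 hK2
    · have hkey : m^(n-1) * |f x - f y| ≤ |f x ^ n - f y ^ n| :=
        abs_pow_sub_pow_ge hn hσ1 (hσ x hx) (hσ y hy)
          (hbounds x hx).1 (hbounds y hy).1 hm0.le
      have hpow : 0 < m^(n-1) := pow_pos hm0 _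
      calc dist (f x) (f y) = |f x - f y| := Real.dist_eq _ _
        _ ≤ (m^(n-1))⁻¹ * |f x ^ n - f y ^ n| := by
            rw [← div_eq_inv_mul, le_div_iff₀ hpow]
            linarith [hkey]
        _ ≤ K2 * |f x ^ n - f y ^ n| :=
            mul_le_mul_of_nonneg_right (le_max_right _ _) (abs_nonneg _)
        _ = K2 * dist (f x ^ n) (f y ^ n) := by rw [Real.dist_eq]
        _ ≤ K2 * max (dist x y) (dist (f x ^ n) (f y ^ n)) :=
            mul_le_mul_of_nonneg_left (le_max_right _ _) (by linarith)
  -- dimH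
  have hdim : dimH B = dimH A := by
    apply le_antisymm
    · rw [← himgΦ]
      apply LipschitzOnWith.dimH_image_le (K := Real.toNNReal K1)
      rw [lipschitzOnWith_iff_dist_le_mul]
      intro p hp q hq
      rw [Real.coe_toNNReal K1 (by linarith)]
      exact hlipΦ p hp q hq
    · rw [← himgΨ]
      apply LipschitzOnWith.dimH_image_le (K := Real.toNNReal K2)
      rw [lipschitzOnWith_iff_dist_le_mul]
      intro p hp q hq
      rw [Real.coe_toNNReal K2 (by linarith)]
      exact hlipΨ p hp q hq
  -- cover transfers
  have hcov1 : ∀ δ : ℝ, 0 < δ → coverNum B (2*K1*δ) ≤ coverNum A δ := by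
    intro δ hδ
    exact coverNum_image_le (by linarith : (0:ℝ) ≤ K1) himgΦ hlipΦ hδ
      (coverSet_nonempty hδ hAR)
  have hcov2 : ∀ δ : ℝ, 0 < δ → coverNum A (2*K2*δ) ≤ coverNum B δ := by
    intro δ hδ
    exact coverNum_image_le (by linarith : (0:ℝ) ≤ K2) himgΨ hlipΨ hδ
      (coverSet_nonempty hδ hBR)
  have hc1 : (1:ℝ) ≤ 2*K1 := by linarith
  have hc2 : (1:ℝ) ≤ 2*K2 := by linarith
  have h1 := boxDims_le hBne hAne hR1 hBR hAR hc1 (by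
    intro δ hδ
    have := hcov1 δ hδ
    rwa [show 2*K1*δ = 2*K1*δ from rfl] at this)
  have h2 := boxDims_le hAne hBne hR1 hAR hBR hc2 (by
    intro δ hδ
    exact hcov2 δ hδ)
  exact ⟨hdim, le_antisymm h1.1 h2.1, le_antisymm h1.2 h2.2⟩
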